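/- There exists a constant C > 0 (independent of δ_s, δ_φ, δ_x and the grids) such that ‖R^{δ_x}_{δ_s,δ_φ} − R_{δ_s,δ_φ}‖ ≤ C · √(1 + δ_x/δ_s) · (δ_x/δ_s), where the norm is the operator norm L²(Ω) → L²(Ω'). (The proof yields C = √(8π).) -/

import Mathlib

/-!
On the cell `S_p × Θ_q` the error `(R^{δ_x} − R) f` equals `δ_s⁻² e_{pq}` with
`e_{pq} = ∑_{ij} ∫_{X_ij} (w(x_ij·θ_q − s_p) − w(x·θ_q − s_p)) f(x) dx`. The hat `w_{δ_s}` is 1-Lipschitz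
with values in `[0, δ_s]` and `|x·θ − x_ij·θ| ≤ δ_x` on `X_ij`, so the kernel difference is at most
`min(δ_x, δ_s)` and vanishes off the strip `|x·θ_q − s_p| < δ_s + δ_x`, which meets `Ω` in area
at most `4(δ_s + δ_x)`. Cauchy–Schwarz on each strip, and the fact that a point lies in at most
`3 + 2δ_x/δ_s` strips of one direction, give
`∑_p e_{pq}² ≤ 4 min(δ_x, δ_s)² (δ_s + δ_x)(3 + 2δ_x/δ_s) ‖f‖²`. The offset cells have length
`δ_s` and the angular cells are disjoint modulo `2π`, so the squared `L²(Ω')` norm of the error is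
at most `2π δ_s⁻³` times this bound, which is `≤ 40π (1 + δ_x/δ_s)(δ_x/δ_s)² ‖f‖²`.
-/

open MeasureTheory Real Set Filter

noncomputable section

/-- The unit direction vector `θ(φ) = (cos φ, sin φ)`. -/
def dirv (φ : ℝ) : ℝ × ℝ := (Real.cos φ, Real.sin φ)

/-- The perpendicular direction `θ(φ)^⊥ = (−sin φ, cos φ)`. -/
def dirp (φ : ℝ) : ℝ × ℝ := (-Real.sin φ, Real.cos φ)

/-- Euclidean inner product on `ℝ²`. -/
def dot2 (x y : ℝ × ℝ) : ℝ := x.1 * y.1 + x.2 * y.2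

/-- The open unit disk `Ω = B(0,1) ⊂ ℝ²`. -/
def unitDisk : Set (ℝ × ℝ) := {x : ℝ × ℝ | x.1 ^ 2 + x.2 ^ 2 < 1}

/-- The Radon transform `[R f](s,φ) = ∫ f(s θ(φ) + t θ(φ)^⊥) dt`. -/
def Radon (f : ℝ × ℝ → ℝ) (s φ : ℝ) : ℝ := ∫ t : ℝ, f (s • dirv φ + t • dirp φ)

/-- The backprojection `[R* g](x) = ∫_{S¹} g(x·θ(φ), φ) dφ`. -/
def Backproj (g : ℝ → ℝ → ℝ) (x : ℝ × ℝ) : ℝ := ∫ φ in Ioc (-π) π, g (dot2 x (dirv φ)) φ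

/-- `L²` norm of an image on the plane (for images supported in the unit disk,
this is the `L²(Ω)` norm). -/
def nImg (f : ℝ × ℝ → ℝ) : ℝ := (∫ x : ℝ × ℝ, f x ^ 2) ^ (1/2 : ℝ)

/-- `L²(Ω)` norm of an image restricted to the unit disk. -/
def nImgD (f : ℝ × ℝ → ℝ) : ℝ := (∫ x in unitDisk, f x ^ 2) ^ (1/2 : ℝ)

/-- `L²(ℝ × S¹)` norm of a sinogram. -/
def nSino (g : ℝ → ℝ → ℝ) : ℝ := (∫ φ in Ioc (-π) π, ∫ s : ℝ, g s φ ^ 2) ^ (1/2 : ℝ)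

/-- `L²(Ω')` norm, `Ω' = (−1,1) × S¹`. -/
def nSinoD (g : ℝ → ℝ → ℝ) : ℝ :=
  (∫ φ in Ioc (-π) π, ∫ s in Ioo (-1 : ℝ) 1, g s φ ^ 2) ^ (1/2 : ℝ)

/-- `L²` modulus of continuity of a sinogram: offset shift `h`, angular shift `γ`. -/
def modCont (g : ℝ → ℝ → ℝ) (h γ : ℝ) : ℝ :=
  (∫ φ in Ioc (-π) π, ∫ s : ℝ, (g (s + h) (φ + γ) - g s φ) ^ 2) ^ (1/2 : ℝ)

/-- `sup_{|h| < r} ω_g(h, 0)`. -/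
def supMod (g : ℝ → ℝ → ℝ) (r : ℝ) : ℝ :=
  sSup ((fun h => modCont g h 0) '' Ioo (-r) r)

/-- `f` vanishes outside the unit disk. -/
def SuppDisk (f : ℝ × ℝ → ℝ) : Prop := ∀ x, x ∉ unitDisk → f x = 0

/-- `g` vanishes for offsets outside `(−1, 1)`. -/
def SuppSino (g : ℝ → ℝ → ℝ) : Prop := ∀ s φ, s ∉ Ioo (-1 : ℝ) 1 → g s φ = 0

/-- `g` is `2π`-periodic in the angular variable, i.e. a function on `ℝ × S¹`. -/
def PeriodicSino (g : ℝ → ℝ → ℝ) : Prop := ∀ s φ, g s (φ + 2 * π) = g s φ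

/-- `f ∈ L²(ℝ²)`. -/
def L2Img (f : ℝ × ℝ → ℝ) : Prop := MemLp f 2 (volume : Measure (ℝ × ℝ))

/-- `g ∈ L²(ℝ × S¹)`. -/
def L2Sino (g : ℝ → ℝ → ℝ) : Prop :=
  MemLp (fun z : ℝ × ℝ => g z.1 z.2) 2
    ((volume : Measure (ℝ × ℝ)).restrict (univ ×ˢ Ioc (-π) π))

/-- The hat profile `w_δ(t) = max(0, δ − |t|)`. -/
def hatw (δ t : ℝ) : ℝ := max 0 (δ - |t|)

/-- Detector centers `s_p = δ_s (p − (P+1)/2)`. -/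
def sCen (δs : ℝ) (P p : ℕ) : ℝ := δs * ((p : ℝ) - ((P : ℝ) + 1) / 2)

/-- Detector cells `S_p = s_p + [−δ_s/2, δ_s/2)`. -/
def sCell (δs : ℝ) (P p : ℕ) : Set ℝ := Ico (sCen δs P p - δs / 2) (sCen δs P p + δs / 2)

/-- The detector cells cover `(−1, 1)`. -/
def CoversI (δs : ℝ) (P : ℕ) : Prop := Ioo (-1 : ℝ) 1 ⊆ ⋃ p ∈ Finset.Icc 1 P, sCell δs P p

/-- Offset-discretized Radon transform `R_{δ_s}`. -/
def RadonS (δs : ℝ) (P : ℕ) (f : ℝ × ℝ → ℝ) (s φ : ℝ) : ℝ :=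
  (δs ^ 2)⁻¹ * ∑ p ∈ Finset.Icc 1 P,
    Set.indicator (sCell δs P p) (fun _ => (1 : ℝ)) s *
      ∫ t : ℝ, hatw δs (t - sCen δs P p) * Radon f t φ

/-- The adjoint of `R_{δ_s}`. -/
def RadonSStar (δs : ℝ) (P : ℕ) (g : ℝ → ℝ → ℝ) (x : ℝ × ℝ) : ℝ :=
  (δs ^ 2)⁻¹ * ∑ p ∈ Finset.Icc 1 P,
    ∫ φ in Ioc (-π) π,
      hatw δs (dot2 x (dirv φ) - sCen δs P p) * ∫ s in sCell δs P p, g s φ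

/-- A valid full angular grid `φ_1 < … < φ_Q` in `[−π, π)` with the wrap-around
conventions `φ_0 = φ_Q − 2π` and `φ_{Q+1} = φ_1 + 2π`. -/
structure AngGrid (Q : ℕ) (φs : ℕ → ℝ) : Prop where
  one_le : 1 ≤ Q
  mono : ∀ q, 1 ≤ q → q < Q → φs q < φs (q + 1)
  mem : ∀ q, 1 ≤ q → q ≤ Q → φs q ∈ Ico (-π) π
  wrap0 : φs 0 = φs Q - 2 * π
  wrapQ : φs (Q + 1) = φs 1 + 2 * π

/-- `δφ` bounds all angular gaps of the grid (it holds for `δφ` the maximal gap). -/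
def GapLe (Q : ℕ) (φs : ℕ → ℝ) (δφ : ℝ) : Prop :=
  ∀ q, 1 ≤ q → q ≤ Q → φs (q + 1) - φs q ≤ δφ

/-- The angular cell `Θ_q`, taken modulo `2π`. -/
def angCell (φs : ℕ → ℝ) (q : ℕ) : Set ℝ :=
  {φ : ℝ | ∃ k : ℤ, φ + 2 * π * (k : ℝ) ∈
    Ico ((φs (q - 1) + φs q) / 2) ((φs q + φs (q + 1)) / 2)}

/-- Offset- and angle-discretized Radon transform `R_{δ_s, δ_φ}`. -/
def RadonSA (δs : ℝ) (P Q : ℕ) (φs : ℕ → ℝ) (f : ℝ × ℝ → ℝ) (s φ : ℝ) : ℝ :=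
  (δs ^ 2)⁻¹ * ∑ q ∈ Finset.Icc 1 Q, ∑ p ∈ Finset.Icc 1 P,
    Set.indicator (sCell δs P p) (fun _ => (1 : ℝ)) s *
    Set.indicator (angCell φs q) (fun _ => (1 : ℝ)) φ *
    ∫ x in unitDisk, hatw δs (dot2 x (dirv (φs q)) - sCen δs P p) * f x

/-- Pixel centers `x_{ij}`. -/
def pixCen (δx : ℝ) (N M i j : ℕ) : ℝ × ℝ :=
  (δx * ((i : ℝ) - ((N : ℝ) + 1) / 2), δx * ((j : ℝ) - ((M : ℝ) + 1) / 2))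

/-- Pixels `X_{ij} = x_{ij} + [−δ_x/2, δ_x/2)²`. -/
def pixCell (δx : ℝ) (N M i j : ℕ) : Set (ℝ × ℝ) :=
  Ico ((pixCen δx N M i j).1 - δx / 2) ((pixCen δx N M i j).1 + δx / 2) ×ˢ
    Ico ((pixCen δx N M i j).2 - δx / 2) ((pixCen δx N M i j).2 + δx / 2)

/-- The pixels cover the unit disk. -/
def CoversDisk (δx : ℝ) (N M : ℕ) : Prop :=
  unitDisk ⊆ ⋃ i ∈ Finset.Icc 1 N, ⋃ j ∈ Finset.Icc 1 M, pixCell δx N M i j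

/-- The fully discrete (pixel-driven) Radon transform `R^{δ_x}_{δ_s, δ_φ}`. -/
def RadonFull (δs : ℝ) (P Q : ℕ) (φs : ℕ → ℝ) (δx : ℝ) (N M : ℕ)
    (f : ℝ × ℝ → ℝ) (s φ : ℝ) : ℝ :=
  (δs ^ 2)⁻¹ * ∑ q ∈ Finset.Icc 1 Q, ∑ p ∈ Finset.Icc 1 P,
    Set.indicator (sCell δs P p) (fun _ => (1 : ℝ)) s *
    Set.indicator (angCell φs q) (fun _ => (1 : ℝ)) φ *
    ∑ i ∈ Finset.Icc 1 N, ∑ j ∈ Finset.Icc 1 M,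
      hatw δs (dot2 (pixCen δx N M i j) (dirv (φs q)) - sCen δs P p) *
        ∫ x in pixCell δx N M i j, f x

/-- The adjoint of the fully discrete Radon transform (pixel-driven backprojection). -/
def RadonFullStar (δs : ℝ) (P Q : ℕ) (φs : ℕ → ℝ) (δx : ℝ) (N M : ℕ)
    (g : ℝ → ℝ → ℝ) (x : ℝ × ℝ) : ℝ :=
  ∑ i ∈ Finset.Icc 1 N, ∑ j ∈ Finset.Icc 1 M,
    Set.indicator (pixCell δx N M i j) (fun _ => (1 : ℝ)) x *
    ((δs ^ 2)⁻¹ * ∑ q ∈ Finset.Icc 1 Q, ∑ p ∈ Finset.Icc 1 P,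
      hatw δs (dot2 (pixCen δx N M i j) (dirv (φs q)) - sCen δs P p) *
        ∫ φ in Ico ((φs (q - 1) + φs q) / 2) ((φs q + φs (q + 1)) / 2),
          ∫ s in sCell δs P p, g s φ)

/- ---------- sparse / limited angle ---------- -/

/-- Limited-angle angular grid on `A = (φ_1, φ_Q)` with `φ_0 = φ_1`, `φ_{Q+1} = φ_Q`. -/
structure AngGridA (Q : ℕ) (φs : ℕ → ℝ) : Prop where
  two_le : 2 ≤ Q
  mono : ∀ q, 1 ≤ q → q < Q → φs q < φs (q + 1)
  mem : ∀ q, 1 ≤ q → q ≤ Q → φs q ∈ Ico (-π) π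
  wrap0 : φs 0 = φs 1
  wrapQ : φs (Q + 1) = φs Q

/-- `L²(Ω'_A)` norm, `Ω'_A = (−1,1) × A` with `A = (a,b)`. -/
def nSinoA (a b : ℝ) (g : ℝ → ℝ → ℝ) : ℝ :=
  (∫ φ in Ioo a b, ∫ s in Ioo (-1 : ℝ) 1, g s φ ^ 2) ^ (1/2 : ℝ)

/-- Limited-angle backprojection `(R^A)*`. -/
def BackprojA (a b : ℝ) (g : ℝ → ℝ → ℝ) (x : ℝ × ℝ) : ℝ :=
  ∫ φ in Ioo a b, g (dot2 x (dirv φ)) φ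

/-- `g ∈ L²((−1,1) × A)` (as a function on `ℝ × A`). -/
def L2SinoA (a b : ℝ) (g : ℝ → ℝ → ℝ) : Prop :=
  MemLp (fun z : ℝ × ℝ => g z.1 z.2) 2
    ((volume : Measure (ℝ × ℝ)).restrict (univ ×ˢ Ioo a b))

/-- limited-angle modulus of continuity `ω_g(h, 0)` on `ℝ × A`. -/
def modContA (a b : ℝ) (g : ℝ → ℝ → ℝ) (h : ℝ) : ℝ :=
  (∫ φ in Ioo a b, ∫ s : ℝ, (g (s + h) φ - g s φ) ^ 2) ^ (1/2 : ℝ)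

/-- Sparse-angle `L²(Ω'_F)` norm (counting measure in the angular direction). -/
def nSinoF (Q : ℕ) (φs : ℕ → ℝ) (g : ℝ → ℝ → ℝ) : ℝ :=
  (∑ q ∈ Finset.Icc 1 Q, ∫ s in Ioo (-1 : ℝ) 1, g s (φs q) ^ 2) ^ (1/2 : ℝ)

/-- Sparse-angle modulus of continuity `ω_g(h, 0)`. -/
def modContF (Q : ℕ) (φs : ℕ → ℝ) (g : ℝ → ℝ → ℝ) (h : ℝ) : ℝ :=
  (∑ q ∈ Finset.Icc 1 Q, ∫ s : ℝ, (g (s + h) (φs q) - g s (φs q)) ^ 2) ^ (1/2 : ℝ)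

/-- Sparse-angle backprojection `(R^F)* g (x) = Σ_q g(x·θ_q, φ_q)`. -/
def BackprojF (Q : ℕ) (φs : ℕ → ℝ) (g : ℝ → ℝ → ℝ) (x : ℝ × ℝ) : ℝ :=
  ∑ q ∈ Finset.Icc 1 Q, g (dot2 x (dirv (φs q))) (φs q)

/-- The discrete sparse-angle Radon transform at a single angle `θang`. -/
def RadonSparse (δs : ℝ) (P : ℕ) (δx : ℝ) (N M : ℕ) (θang : ℝ)
    (f : ℝ × ℝ → ℝ) (s : ℝ) : ℝ :=
  (δs ^ 2)⁻¹ * ∑ p ∈ Finset.Icc 1 P,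
    Set.indicator (sCell δs P p) (fun _ => (1 : ℝ)) s *
    ∑ i ∈ Finset.Icc 1 N, ∑ j ∈ Finset.Icc 1 M,
      hatw δs (dot2 (pixCen δx N M i j) (dirv θang) - sCen δs P p) *
        ∫ x in pixCell δx N M i j, f x

/-- Adjoint of the discrete sparse-angle Radon transform. -/
def RadonSparseStar (δs : ℝ) (P : ℕ) (δx : ℝ) (N M Q : ℕ) (φs : ℕ → ℝ)
    (g : ℝ → ℝ → ℝ) (x : ℝ × ℝ) : ℝ :=
  ∑ i ∈ Finset.Icc 1 N, ∑ j ∈ Finset.Icc 1 M,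
    Set.indicator (pixCell δx N M i j) (fun _ => (1 : ℝ)) x *
    ((δs ^ 2)⁻¹ * ∑ q ∈ Finset.Icc 1 Q, ∑ p ∈ Finset.Icc 1 P,
      hatw δs (dot2 (pixCen δx N M i j) (dirv (φs q)) - sCen δs P p) *
        ∫ s in sCell δs P p, g s (φs q))

/- ---------- fanbeam ---------- -/

/-- Detector width `W = 2R/√(R_E² − 1)`. -/
def Wfan (RE R : ℝ) : ℝ := 2 * R / Real.sqrt (RE ^ 2 - 1)

/-- The fanbeam transform `F`. -/
def Fanbeam (RE R : ℝ) (f : ℝ × ℝ → ℝ) (ξ α : ℝ) : ℝ :=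
  Real.sqrt (ξ ^ 2 + R ^ 2) *
    ∫ t : ℝ, f (t • (ξ • dirv α + R • dirp α) - RE • dirp α)

/-- The unweighted fanbeam transform `G`. -/
def GFan (RE R : ℝ) (f : ℝ × ℝ → ℝ) (ξ α : ℝ) : ℝ :=
  ∫ t : ℝ, f (t • (ξ • dirv α + R • dirp α) - RE • dirp α)

/-- Fan projection coordinate `ξ(x, α) = x·θ(α) R / (x·θ(α)^⊥ + R_E)`. -/
def fanProj (RE R : ℝ) (x : ℝ × ℝ) (α : ℝ) : ℝ :=
  dot2 x (dirv α) * R / (dot2 x (dirp α) + RE)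

/-- Adjoint `G*` of the unweighted fanbeam transform. -/
def GFanStar (RE R : ℝ) (g : ℝ → ℝ → ℝ) (x : ℝ × ℝ) : ℝ :=
  ∫ α in Ioc (-π) π, (dot2 x (dirp α) + RE)⁻¹ * g (fanProj RE R x α) α

/-- Adjoint `F*` of the fanbeam transform. -/
def FanbeamStar (RE R : ℝ) (g : ℝ → ℝ → ℝ) (x : ℝ × ℝ) : ℝ :=
  ∫ α in Ioc (-π) π,
    Real.sqrt (fanProj RE R x α ^ 2 + R ^ 2) * (dot2 x (dirp α) + RE)⁻¹ *
      g (fanProj RE R x α) α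

/-- `L²(Ω')` norm for the fanbeam geometry, `Ω' = (−W/2, W/2) × S¹`. -/
def nSinoW (RE R : ℝ) (g : ℝ → ℝ → ℝ) : ℝ :=
  (∫ α in Ioc (-π) π, ∫ ξ in Ioo (-(Wfan RE R) / 2) (Wfan RE R / 2), g ξ α ^ 2) ^ (1/2 : ℝ)

/-- `g` vanishes for offsets outside `(−W/2, W/2)`. -/
def SuppSinoW (RE R : ℝ) (g : ℝ → ℝ → ℝ) : Prop :=
  ∀ ξ α, ξ ∉ Ioo (-(Wfan RE R) / 2) (Wfan RE R / 2) → g ξ α = 0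

/-- `g ∈ L²((−W/2, W/2) × S¹)`. -/
def L2SinoW (RE R : ℝ) (g : ℝ → ℝ → ℝ) : Prop :=
  MemLp (fun z : ℝ × ℝ => g z.1 z.2) 2
    ((volume : Measure (ℝ × ℝ)).restrict
      (Ioo (-(Wfan RE R) / 2) (Wfan RE R / 2) ×ˢ Ioc (-π) π))

/-- Offset-discretized unweighted fanbeam transform `G_{δ_ξ}`, `δ_ξ = W/P`. -/
def GFanS (RE R : ℝ) (P : ℕ) (f : ℝ × ℝ → ℝ) (ξ α : ℝ) : ℝ :=
  ((Wfan RE R / P) ^ 2)⁻¹ * ∑ p ∈ Finset.Icc 1 P,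
    Set.indicator (sCell (Wfan RE R / P) P p) (fun _ => (1 : ℝ)) ξ *
      ∫ x in unitDisk,
        hatw (Wfan RE R / P) (fanProj RE R x α - sCen (Wfan RE R / P) P p) *
          f x / (dot2 x (dirp α) + RE)

/-- Adjoint of `G_{δ_ξ}`. -/
def GFanSStar (RE R : ℝ) (P : ℕ) (g : ℝ → ℝ → ℝ) (x : ℝ × ℝ) : ℝ :=
  ((Wfan RE R / P) ^ 2)⁻¹ * ∑ p ∈ Finset.Icc 1 P,
    ∫ α in Ioc (-π) π,
      hatw (Wfan RE R / P) (fanProj RE R x α - sCen (Wfan RE R / P) P p) *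
        (dot2 x (dirp α) + RE)⁻¹ *
        ∫ ξ in sCell (Wfan RE R / P) P p, g ξ α

/-- Offset- and angle-discretized `G_{δ_ξ, δ_α}`. -/
def GFanSA (RE R : ℝ) (P Q : ℕ) (αs : ℕ → ℝ) (f : ℝ × ℝ → ℝ) (ξ α : ℝ) : ℝ :=
  ((Wfan RE R / P) ^ 2)⁻¹ * ∑ p ∈ Finset.Icc 1 P, ∑ q ∈ Finset.Icc 1 Q,
    Set.indicator (sCell (Wfan RE R / P) P p) (fun _ => (1 : ℝ)) ξ *
    Set.indicator (angCell αs q) (fun _ => (1 : ℝ)) α *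
      ∫ x in unitDisk,
        hatw (Wfan RE R / P) (fanProj RE R x (αs q) - sCen (Wfan RE R / P) P p) *
          f x / (dot2 x (dirp (αs q)) + RE)

/-- Fully discrete unweighted fanbeam transform `G^{δ_x}_{δ_ξ, δ_α}`. -/
def GFanFull (RE R : ℝ) (P Q : ℕ) (αs : ℕ → ℝ) (δx : ℝ) (N M : ℕ)
    (f : ℝ × ℝ → ℝ) (ξ α : ℝ) : ℝ :=
  ((Wfan RE R / P) ^ 2)⁻¹ * ∑ p ∈ Finset.Icc 1 P, ∑ q ∈ Finset.Icc 1 Q,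
    Set.indicator (sCell (Wfan RE R / P) P p) (fun _ => (1 : ℝ)) ξ *
    Set.indicator (angCell αs q) (fun _ => (1 : ℝ)) α *
    ∑ i ∈ Finset.Icc 1 N, ∑ j ∈ Finset.Icc 1 M,
      hatw (Wfan RE R / P)
          (fanProj RE R (pixCen δx N M i j) (αs q) - sCen (Wfan RE R / P) P p) *
        (dot2 (pixCen δx N M i j) (dirp (αs q)) + RE)⁻¹ *
        ∫ x in pixCell δx N M i j, f x

/-- Fully discrete pixel-driven fanbeam transform `F^{δ_x}_{δ_ξ, δ_α}`. -/
def FanFull (RE R : ℝ) (P Q : ℕ) (αs : ℕ → ℝ) (δx : ℝ) (N M : ℕ)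
    (f : ℝ × ℝ → ℝ) (ξ α : ℝ) : ℝ :=
  ((Wfan RE R / P) ^ 2)⁻¹ * ∑ p ∈ Finset.Icc 1 P, ∑ q ∈ Finset.Icc 1 Q,
    Set.indicator (sCell (Wfan RE R / P) P p) (fun _ => (1 : ℝ)) ξ *
    Set.indicator (angCell αs q) (fun _ => (1 : ℝ)) α *
    Real.sqrt (sCen (Wfan RE R / P) P p ^ 2 + R ^ 2) *
    ∑ i ∈ Finset.Icc 1 N, ∑ j ∈ Finset.Icc 1 M,
      hatw (Wfan RE R / P)
          (fanProj RE R (pixCen δx N M i j) (αs q) - sCen (Wfan RE R / P) P p) *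
        (dot2 (pixCen δx N M i j) (dirp (αs q)) + RE)⁻¹ *
        ∫ x in pixCell δx N M i j, f x

/-- Adjoint of the fully discrete pixel-driven fanbeam transform. -/
def FanFullStar (RE R : ℝ) (P Q : ℕ) (αs : ℕ → ℝ) (δx : ℝ) (N M : ℕ)
    (g : ℝ → ℝ → ℝ) (x : ℝ × ℝ) : ℝ :=
  ∑ i ∈ Finset.Icc 1 N, ∑ j ∈ Finset.Icc 1 M,
    Set.indicator (pixCell δx N M i j) (fun _ => (1 : ℝ)) x *
    (((Wfan RE R / P) ^ 2)⁻¹ * ∑ q ∈ Finset.Icc 1 Q, ∑ p ∈ Finset.Icc 1 P,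
      hatw (Wfan RE R / P)
          (fanProj RE R (pixCen δx N M i j) (αs q) - sCen (Wfan RE R / P) P p) *
        Real.sqrt (sCen (Wfan RE R / P) P p ^ 2 + R ^ 2) *
        (dot2 (pixCen δx N M i j) (dirp (αs q)) + RE)⁻¹ *
        ∫ α in Ico ((αs (q - 1) + αs q) / 2) ((αs q + αs (q + 1)) / 2),
          ∫ ξ in sCell (Wfan RE R / P) P p, g ξ α)

open Function

lemma hatw_nonneg (δ t : ℝ) : 0 ≤ hatw δ t := le_max_left _ _

lemma hatw_le {δ : ℝ} (hδ : 0 ≤ δ) (t : ℝ) : hatw δ t ≤ δ :=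
  max_le hδ (sub_le_self _ (abs_nonneg t))

lemma hatw_eq_zero {δ t : ℝ} (h : δ ≤ |t|) : hatw δ t = 0 :=
  max_eq_left (sub_nonpos.mpr h)

lemma continuous_hatw (δ : ℝ) : Continuous (hatw δ) := by
  unfold hatw; fun_prop

lemma abs_hatw_sub_hatw_le {δ : ℝ} (hδ : 0 ≤ δ) (a b : ℝ) :
    |hatw δ a - hatw δ b| ≤ min |a - b| δ := by
  refine le_min ?_ (abs_sub_le_of_nonneg_of_le (hatw_nonneg δ a) (hatw_le hδ a)
    (hatw_nonneg δ b) (hatw_le hδ b))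
  calc |hatw δ a - hatw δ b| = |max (δ - |a|) 0 - max (δ - |b|) 0| := by
        simp only [hatw, max_comm (0 : ℝ)]
    _ ≤ |(δ - |a|) - (δ - |b|)| := abs_max_sub_max_le_abs _ _ _
    _ = |(|b| - |a|)| := by ring_nf
    _ ≤ |a - b| := by rw [abs_sub_comm a b]; exact abs_abs_sub_abs_le_abs_sub b a

lemma abs_sub_sCen_le_of_mem_sCell {δ s : ℝ} {P p : ℕ} (hs : s ∈ sCell δ P p) :
    |s - sCen δ P p| ≤ δ / 2 := by
  obtain ⟨h₁, h₂⟩ := hs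
  rw [abs_le]; constructor <;> linarith

lemma measurableSet_sCell (δ : ℝ) (P p : ℕ) : MeasurableSet (sCell δ P p) :=
  measurableSet_Ico

lemma volume_sCell (δ : ℝ) (P p : ℕ) : volume (sCell δ P p) = ENNReal.ofReal δ := by
  rw [sCell, Real.volume_Ico]; ring_nf

lemma pairwise_disjoint_sCell {δ : ℝ} (hδ : 0 < δ) (P : ℕ) :
    Pairwise (Disjoint on sCell δ P) := by
  have hmono : Monotone fun n : ℕ => sCen δ P n - δ / 2 := fun m n hmn => by
    have : (m : ℝ) ≤ n := by exact_mod_cast hmn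
    simp only [sCen]; nlinarith
  have hcell : sCell δ P = fun n => Ico (sCen δ P n - δ / 2) (sCen δ P (n + 1) - δ / 2) := by
    funext n; simp only [sCell, sCen, Nat.cast_add, Nat.cast_one]; ring_nf
  rw [hcell]
  exact hmono.pairwise_disjoint_on_Ico_succ

lemma pixCell_eq (δx : ℝ) (N M i j : ℕ) : pixCell δx N M i j = sCell δx N i ×ˢ sCell δx M j :=
  rfl

lemma measurableSet_pixCell (δx : ℝ) (N M i j : ℕ) : MeasurableSet (pixCell δx N M i j) :=
  measurableSet_Ico.prod measurableSet_Ico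

lemma pairwiseDisjoint_pixCell {δx : ℝ} (hδx : 0 < δx) (N M : ℕ) (s : Set (ℕ × ℕ)) :
    s.PairwiseDisjoint fun ij => pixCell δx N M ij.1 ij.2 := by
  rintro ⟨i, j⟩ - ⟨i', j'⟩ - hne
  simp only [Function.onFun, pixCell_eq, Set.disjoint_prod]
  by_cases hi : i = i'
  · exact Or.inr (pairwise_disjoint_sCell hδx M fun hj => hne (by rw [hi, hj]))
  · exact Or.inl (pairwise_disjoint_sCell hδx N hi)

lemma abs_dot2_dirv_sub_le_of_mem_pixCell {δx : ℝ} {N M i j : ℕ} {x : ℝ × ℝ}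
    (hx : x ∈ pixCell δx N M i j) (φ : ℝ) :
    |dot2 x (dirv φ) - dot2 (pixCen δx N M i j) (dirv φ)| ≤ δx := by
  rw [pixCell_eq] at hx
  have h₁ := abs_sub_sCen_le_of_mem_sCell hx.1
  have h₂ := abs_sub_sCen_le_of_mem_sCell hx.2
  calc |dot2 x (dirv φ) - dot2 (pixCen δx N M i j) (dirv φ)|
      = |(x.1 - sCen δx N i) * Real.cos φ + (x.2 - sCen δx M j) * Real.sin φ| := by
        simp only [dot2, dirv, pixCen, sCen]; ring_nf
    _ ≤ |x.1 - sCen δx N i| * 1 + |x.2 - sCen δx M j| * 1 := by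
        refine (abs_add_le _ _).trans ?_
        rw [abs_mul, abs_mul]
        gcongr
        exacts [Real.abs_cos_le_one φ, Real.abs_sin_le_one φ]
    _ ≤ δx := by linarith

lemma volume_unitDisk_lt_top : volume unitDisk < ⊤ := by
  have hsub : unitDisk ⊆ Ioo (-1 : ℝ) 1 ×ˢ Ioo (-1 : ℝ) 1 := by
    intro x (hx : x.1 ^ 2 + x.2 ^ 2 < 1)
    simp only [mem_prod, mem_Ioo, ← abs_lt, ← sq_lt_one_iff_abs_lt_one]
    constructor <;> nlinarith [sq_nonneg x.1, sq_nonneg x.2]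
  refine (measure_mono hsub).trans_lt ?_
  rw [Measure.volume_eq_prod, Measure.prod_prod, Real.volume_Ioo]
  exact ENNReal.mul_lt_top ENNReal.ofReal_lt_top ENNReal.ofReal_lt_top

lemma SuppDisk.integrable {f : ℝ × ℝ → ℝ} (hsupp : SuppDisk f)
    (hf : MemLp f 2 (volume : Measure (ℝ × ℝ))) : Integrable f := by
  have : IsFiniteMeasure (volume.restrict unitDisk) :=
    isFiniteMeasure_restrict.mpr volume_unitDisk_lt_top.ne
  refine (integrableOn_iff_integrable_of_support_subset fun x hx => ?_).mp
    ((hf.restrict unitDisk).integrable one_le_two)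
  by_contra h
  exact hx (hsupp x h)

lemma sum_setIntegral_pixCell {δx : ℝ} (hδx : 0 < δx) {N M : ℕ} (hcov : CoversDisk δx N M)
    {g : ℝ × ℝ → ℝ} (hg : Integrable g) (hsupp : SuppDisk g) :
    ∑ i ∈ Finset.Icc 1 N, ∑ j ∈ Finset.Icc 1 M, ∫ x in pixCell δx N M i j, g x = ∫ x, g x := by
  rw [← Finset.sum_product', ← integral_biUnion_finset _
    (fun ij _ => measurableSet_pixCell δx N M ij.1 ij.2) (pairwiseDisjoint_pixCell hδx N M _)
    (fun _ _ => hg.integrableOn)]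
  refine setIntegral_eq_integral_of_forall_compl_eq_zero fun x hx => hsupp x fun hxΩ => hx ?_
  obtain ⟨i, hi, j, hj, hxij⟩ : ∃ i ∈ Finset.Icc 1 N, ∃ j ∈ Finset.Icc 1 M,
      x ∈ pixCell δx N M i j := by simpa only [mem_iUnion, exists_prop] using hcov hxΩ
  exact mem_iUnion₂.mpr ⟨(i, j), Finset.mem_product.mpr ⟨hi, hj⟩, hxij⟩

def planeRotation (φ : ℝ) : ℝ × ℝ →ₗ[ℝ] ℝ × ℝ :=
  Matrix.toLin (Module.Basis.finTwoProd ℝ) (Module.Basis.finTwoProd ℝ)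
    !![Real.cos φ, Real.sin φ; -Real.sin φ, Real.cos φ]

lemma planeRotation_apply (φ : ℝ) (x : ℝ × ℝ) :
    planeRotation φ x = (dot2 x (dirv φ), dot2 x (dirp φ)) := by
  simp only [planeRotation, Matrix.toLin_finTwoProd_apply, dot2, dirv, dirp]
  ext <;> ring

lemma det_planeRotation (φ : ℝ) : LinearMap.det (planeRotation φ) = 1 := by
  rw [planeRotation, LinearMap.det_toLin, Matrix.det_fin_two_of]
  nlinarith [Real.sin_sq_add_cos_sq φ]

def strip (φ s w : ℝ) : Set (ℝ × ℝ) := {x | |dot2 x (dirv φ) - s| < w}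

lemma measurableSet_strip (φ s w : ℝ) : MeasurableSet (strip φ s w) :=
  measurableSet_lt (by unfold dot2; fun_prop) measurable_const

lemma volume_strip_inter_unitDisk_le (φ s w : ℝ) :
    volume (strip φ s w ∩ unitDisk) ≤ ENNReal.ofReal (4 * w) := by
  have hsub : strip φ s w ∩ unitDisk
      ⊆ planeRotation φ ⁻¹' (Ioo (s - w) (s + w) ×ˢ Ioo (-1) 1) := by
    rintro x ⟨hs, hx⟩
    simp only [strip, unitDisk, mem_ofPred_eq, abs_lt] at hs hx
    have hpyth : dot2 x (dirv φ) ^ 2 + dot2 x (dirp φ) ^ 2 = x.1 ^ 2 + x.2 ^ 2 := by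
      simp only [dot2, dirv, dirp]
      linear_combination (x.1 ^ 2 + x.2 ^ 2) * Real.sin_sq_add_cos_sq φ
    rw [mem_preimage, planeRotation_apply, mem_prod, mem_Ioo, mem_Ioo, ← abs_lt,
      ← sq_lt_one_iff_abs_lt_one]
    exact ⟨⟨by linarith, by linarith⟩, by nlinarith [sq_nonneg (dot2 x (dirv φ))]⟩
  calc volume (strip φ s w ∩ unitDisk)
      ≤ volume (planeRotation φ ⁻¹' (Ioo (s - w) (s + w) ×ˢ Ioo (-1) 1)) := measure_mono hsub
    _ = ENNReal.ofReal (4 * w) := by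
      rw [Measure.addHaar_preimage_linearMap _ (by rw [det_planeRotation]; norm_num),
        det_planeRotation, inv_one, abs_one, ENNReal.ofReal_one, one_mul, Measure.volume_eq_prod,
        Measure.prod_prod, Real.volume_Ioo, Real.volume_Ioo, ← ENNReal.ofReal_mul' (by norm_num)]
      ring_nf

lemma sq_setIntegral_abs_le {α : Type*} [MeasurableSpace α] {μ : Measure α} {A : Set α}
    (hA : μ A ≠ ⊤) {f : α → ℝ} (hf : MemLp f 2 μ) :
    (∫ x in A, |f x| ∂μ) ^ 2 ≤ μ.real A * ∫ x in A, f x ^ 2 ∂μ := by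
  have : IsFiniteMeasure (μ.restrict A) := isFiniteMeasure_restrict.mpr hA
  have hfA : MemLp (fun x => |f x|) (ENNReal.ofReal 2) (μ.restrict A) := by
    simpa [Real.norm_eq_abs] using (hf.restrict A).norm
  have hHolder := integral_mul_le_Lp_mul_Lq_of_nonneg Real.HolderConjugate.two_two
    (ae_of_all _ fun x => abs_nonneg (f x)) (ae_of_all _ fun _ => zero_le_one) hfA
    (memLp_const (1 : ℝ))
  simp only [mul_one, one_pow, integral_const, smul_eq_mul, measureReal_restrict_apply_univ,
    Real.rpow_two, sq_abs] at hHolder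
  calc (∫ x in A, |f x| ∂μ) ^ 2
      ≤ ((∫ x in A, f x ^ 2 ∂μ) ^ (1 / 2 : ℝ) * (μ.real A) ^ (1 / 2 : ℝ)) ^ 2 :=
        pow_le_pow_left₀ (integral_nonneg fun x => abs_nonneg _) hHolder 2
    _ = μ.real A * ∫ x in A, f x ^ 2 ∂μ := by
        rw [mul_pow, ← Real.sqrt_eq_rpow, ← Real.sqrt_eq_rpow,
          Real.sq_sqrt (integral_nonneg fun x => sq_nonneg _), Real.sq_sqrt measureReal_nonneg,
          mul_comm]

lemma abs_hatw_pixCen_sub_hatw_le {δs δx : ℝ} (hδs : 0 ≤ δs) {N M i j : ℕ} {x : ℝ × ℝ}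
    (hx : x ∈ pixCell δx N M i j) (φ s : ℝ) :
    |hatw δs (dot2 (pixCen δx N M i j) (dirv φ) - s) - hatw δs (dot2 x (dirv φ) - s)|
      ≤ (strip φ s (δs + δx)).indicator (fun _ => min δx δs) x := by
  have hdist := abs_dot2_dirv_sub_le_of_mem_pixCell hx φ
  by_cases hxs : x ∈ strip φ s (δs + δx)
  · rw [indicator_of_mem hxs]
    refine (abs_hatw_sub_hatw_le hδs _ _).trans (min_le_min_right _ ?_)
    rwa [sub_sub_sub_cancel_right, abs_sub_comm]
  · -- outside the widened strip both the pixel centre and `x` miss the support of the hat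
    have hfar : δs + δx ≤ |dot2 x (dirv φ) - s| := not_lt.mp hxs
    have h₁ := abs_sub_abs_le_abs_sub (dot2 x (dirv φ) - s)
      (dot2 (pixCen δx N M i j) (dirv φ) - s)
    rw [sub_sub_sub_cancel_right] at h₁
    have hδx : 0 ≤ δx := (abs_nonneg _).trans hdist
    rw [indicator_of_notMem hxs, hatw_eq_zero (by linarith), hatw_eq_zero (by linarith),
      sub_zero, abs_zero]

def pixelError (δs δx : ℝ) (N M : ℕ) (f : ℝ × ℝ → ℝ) (φ s : ℝ) : ℝ :=
  ∑ i ∈ Finset.Icc 1 N, ∑ j ∈ Finset.Icc 1 M,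
      hatw δs (dot2 (pixCen δx N M i j) (dirv φ) - s) * (∫ x in pixCell δx N M i j, f x)
    - ∫ x in unitDisk, hatw δs (dot2 x (dirv φ) - s) * f x

section PixelError

variable {δs δx : ℝ} {N M : ℕ} {f : ℝ × ℝ → ℝ}

lemma pixelError_eq (hδs : 0 ≤ δs) (hδx : 0 < δx) (hcov : CoversDisk δx N M)
    (hsupp : SuppDisk f) (hf : Integrable f) (φ s : ℝ) :
    pixelError δs δx N M f φ s = ∑ i ∈ Finset.Icc 1 N, ∑ j ∈ Finset.Icc 1 M,
      ∫ x in pixCell δx N M i j,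
        (hatw δs (dot2 (pixCen δx N M i j) (dirv φ) - s) - hatw δs (dot2 x (dirv φ) - s)) *
          f x := by
  have hw : Continuous fun x => hatw δs (dot2 x (dirv φ) - s) :=
    (continuous_hatw δs).comp (by unfold dot2; fun_prop)
  have hwf : Integrable fun x => hatw δs (dot2 x (dirv φ) - s) * f x :=
    hf.bdd_mul hw.aestronglyMeasurable (ae_of_all _ fun x => by
      rw [Real.norm_of_nonneg (hatw_nonneg _ _)]; exact hatw_le hδs _)
  have hwf_supp : SuppDisk fun x => hatw δs (dot2 x (dirv φ) - s) * f x := fun x hx => by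
    simp only [hsupp x hx, mul_zero]
  rw [pixelError, setIntegral_eq_integral_of_forall_compl_eq_zero hwf_supp,
    ← sum_setIntegral_pixCell hδx hcov hwf hwf_supp, ← Finset.sum_sub_distrib]
  refine Finset.sum_congr rfl fun i _ => ?_
  rw [← Finset.sum_sub_distrib]
  refine Finset.sum_congr rfl fun j _ => ?_
  rw [← integral_const_mul, ← integral_sub (hf.integrableOn.const_mul _) hwf.integrableOn]
  simp only [sub_mul]

lemma abs_pixelError_le (hδs : 0 ≤ δs) (hδx : 0 < δx) (hcov : CoversDisk δx N M)
    (hsupp : SuppDisk f) (hf : Integrable f) (φ s : ℝ) :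
    |pixelError δs δx N M f φ s| ≤ min δx δs * ∫ x in strip φ s (δs + δx), |f x| := by
  set g := (strip φ s (δs + δx)).indicator fun y => min δx δs * |f y|
  have hg : Integrable g := (hf.abs.const_mul _).indicator (measurableSet_strip _ _ _)
  have hg_supp : SuppDisk g := fun x hx => by
    simp only [g, indicator, hsupp x hx, abs_zero, mul_zero, ite_self]
  rw [pixelError_eq hδs hδx hcov hsupp hf, ← integral_const_mul,
    ← integral_indicator (measurableSet_strip _ _ _),
    ← sum_setIntegral_pixCell hδx hcov hg hg_supp]
  refine (Finset.abs_sum_le_sum_abs _ _).trans (Finset.sum_le_sum fun i _ => ?_)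
  refine (Finset.abs_sum_le_sum_abs _ _).trans (Finset.sum_le_sum fun j _ => ?_)
  rw [← Real.norm_eq_abs]
  refine norm_integral_le_of_norm_le hg.integrableOn
    (ae_restrict_of_forall_mem (measurableSet_pixCell δx N M i j) fun x hx => ?_)
  rw [Real.norm_eq_abs, abs_mul]
  exact (mul_le_mul_of_nonneg_right (abs_hatw_pixCen_sub_hatw_le hδs hx φ s)
    (abs_nonneg _)).trans (indicator_mul_left _ (fun _ => min δx δs) fun y => |f y|).ge

lemma sq_pixelError_le (hδs : 0 ≤ δs) (hδx : 0 < δx) (hcov : CoversDisk δx N M)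
    (hsupp : SuppDisk f) (hf : MemLp f 2 (volume : Measure (ℝ × ℝ))) (φ s : ℝ) :
    pixelError δs δx N M f φ s ^ 2
      ≤ min δx δs ^ 2 * (4 * (δs + δx)) * ∫ x in strip φ s (δs + δx), f x ^ 2 := by
  set S := strip φ s (δs + δx)
  have hS : MeasurableSet S := measurableSet_strip _ _ _
  have hrestrict : ∀ g : ℝ × ℝ → ℝ, SuppDisk g → ∫ x in S, g x = ∫ x in S ∩ unitDisk, g x :=
    fun g hg => (setIntegral_eq_of_subset_of_forall_sdiff_eq_zero hS inter_subset_left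
      fun x hx => hg x fun hxΩ => hx.2 ⟨hx.1, hxΩ⟩)
  have hvol : volume.real (S ∩ unitDisk) ≤ 4 * (δs + δx) :=
    ENNReal.toReal_le_of_le_ofReal (by positivity) (volume_strip_inter_unitDisk_le φ s _)
  have hCS := sq_setIntegral_abs_le (A := S ∩ unitDisk)
    ((measure_mono inter_subset_right).trans_lt volume_unitDisk_lt_top).ne hf
  rw [← hrestrict (fun x => |f x|) fun x hx => by simp [hsupp x hx],
    ← hrestrict (fun x => f x ^ 2) fun x hx => by simp [hsupp x hx]] at hCS
  calc pixelError δs δx N M f φ s ^ 2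
      ≤ (min δx δs * ∫ x in S, |f x|) ^ 2 :=
        (sq_abs _).ge.trans (pow_le_pow_left₀ (abs_nonneg _)
          (abs_pixelError_le hδs hδx hcov hsupp (hsupp.integrable hf) φ s) 2)
    _ ≤ min δx δs ^ 2 * (4 * (δs + δx)) * ∫ x in S, f x ^ 2 := by
        rw [mul_pow, mul_assoc]
        exact mul_le_mul_of_nonneg_left (hCS.trans (mul_le_mul_of_nonneg_right hvol
          (setIntegral_nonneg hS fun x _ => sq_nonneg _))) (sq_nonneg _)

end PixelError

lemma Finset.card_le_of_forall_sub_lt {S : Finset ℕ} {L : ℝ} (hL : 0 ≤ L)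
    (h : ∀ a ∈ S, ∀ b ∈ S, (a : ℝ) - b < L) : (S.card : ℝ) ≤ L + 1 := by
  rcases S.eq_empty_or_nonempty with rfl | hS
  · simp only [Finset.card_empty, Nat.cast_zero]; linarith
  have hcard : S.card ≤ S.max' hS + 1 - S.min' hS := by
    rw [← Nat.card_Icc]
    exact Finset.card_le_card fun p hp => Finset.mem_Icc.mpr ⟨S.min'_le p hp, S.le_max' p hp⟩
  have hmin_le : S.min' hS ≤ S.max' hS + 1 := (S.min'_le _ (S.max'_mem hS)).trans (Nat.le_succ _)
  have hspread := h _ (S.max'_mem hS) _ (S.min'_mem hS)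
  have hcard' : (S.card : ℝ) ≤ ((S.max' hS + 1 - S.min' hS : ℕ) : ℝ) := by exact_mod_cast hcard
  push_cast [Nat.cast_sub hmin_le] at hcard'
  linarith

lemma card_abs_sub_sCen_lt_le {δ w : ℝ} (hδ : 0 < δ) (hw : 0 ≤ w) (P : ℕ) (r : ℝ) :
    (((Finset.Icc 1 P).filter fun p => |r - sCen δ P p| < w).card : ℝ) ≤ 2 * w / δ + 1 := by
  refine Finset.card_le_of_forall_sub_lt (by positivity) fun a ha b hb => ?_
  have ha' := abs_lt.mp (Finset.mem_filter.mp ha).2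
  have hb' := abs_lt.mp (Finset.mem_filter.mp hb).2
  rw [lt_div_iff₀ hδ]
  simp only [sCen] at ha' hb'
  linarith

lemma sum_setIntegral_strip_le {δs w : ℝ} (hδs : 0 < δs) (hw : 0 ≤ w) (P : ℕ) (φ : ℝ)
    {g : ℝ × ℝ → ℝ} (hg : Integrable g) (hg0 : 0 ≤ g) :
    ∑ p ∈ Finset.Icc 1 P, ∫ x in strip φ (sCen δs P p) w, g x ≤ (2 * w / δs + 1) * ∫ x, g x := by
  classical
  have hpointwise : ∀ x, ∑ p ∈ Finset.Icc 1 P, (strip φ (sCen δs P p) w).indicator g x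
      ≤ (2 * w / δs + 1) * g x := fun x => by
    rw [Finset.sum_indicator_eq_sum_filter, Finset.sum_const, nsmul_eq_mul]
    exact mul_le_mul_of_nonneg_right (card_abs_sub_sCen_lt_le hδs hw P _) (hg0 x)
  simp_rw [← integral_indicator (measurableSet_strip _ _ _)]
  rw [← integral_finsetSum _ fun p _ => hg.indicator (measurableSet_strip _ _ _),
    ← integral_const_mul]
  exact integral_mono (integrable_finsetSum _ fun p _ => hg.indicator (measurableSet_strip _ _ _))
    (hg.const_mul _) hpointwise

lemma sum_sq_pixelError_le {δs δx : ℝ} (hδs : 0 < δs) (hδx : 0 < δx) {N M : ℕ}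
    (hcov : CoversDisk δx N M) {f : ℝ × ℝ → ℝ} (hsupp : SuppDisk f)
    (hf : MemLp f 2 (volume : Measure (ℝ × ℝ))) (P : ℕ) (φ : ℝ) :
    ∑ p ∈ Finset.Icc 1 P, pixelError δs δx N M f φ (sCen δs P p) ^ 2
      ≤ min δx δs ^ 2 * (4 * (δs + δx)) * ((2 * (δs + δx) / δs + 1) * ∫ x, f x ^ 2) := by
  refine (Finset.sum_le_sum fun p _ => sq_pixelError_le hδs.le hδx hcov hsupp hf φ _).trans ?_
  rw [← Finset.mul_sum]
  exact mul_le_mul_of_nonneg_left (sum_setIntegral_strip_le hδs (by positivity) P φ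
    hf.integrable_sq fun x => sq_nonneg (f x)) (by positivity)

namespace AngGrid

variable {Q : ℕ} {φs : ℕ → ℝ}

lemma monotoneOn (hang : AngGrid Q φs) : MonotoneOn φs (Iic (Q + 1)) := by
  refine monotoneOn_of_le_succ ordConnected_Iic fun n _ _ hn => ?_
  rw [Order.succ_eq_add_one] at hn ⊢
  have hφ₁ := hang.mem 1 le_rfl hang.one_le
  have hφQ := hang.mem Q hang.one_le le_rfl
  rcases Nat.eq_zero_or_pos n with rfl | hn₀
  · rw [hang.wrap0, zero_add]; linarith [hφ₁.1, hφQ.2]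
  rcases (Nat.le_of_succ_le_succ (mem_Iic.mp hn)).lt_or_eq with hlt | rfl
  · exact (hang.mono n hn₀ hlt).le
  · rw [hang.wrapQ]; linarith [hφ₁.1, hφQ.2]

lemma monotoneOn_midpoint (hang : AngGrid Q φs) :
    MonotoneOn (fun q => (φs q + φs (q + 1)) / 2) (Iic Q) := fun a ha b hb hab => by
  have h₁ := hang.monotoneOn (mem_Iic.mpr (Nat.le_succ_of_le ha))
    (mem_Iic.mpr (Nat.le_succ_of_le hb)) hab
  have h₂ := hang.monotoneOn (mem_Iic.mpr (Nat.succ_le_succ ha))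
    (mem_Iic.mpr (Nat.succ_le_succ hb)) (Nat.succ_le_succ hab)
  dsimp only; linarith

lemma pairwiseDisjoint_angCell (hang : AngGrid Q φs) :
    (↑(Finset.Icc 1 Q) : Set ℕ).PairwiseDisjoint (angCell φs) := by
  set mid : ℕ → ℝ := fun q => (φs q + φs (q + 1)) / 2
  have hmid : MonotoneOn mid (Iic Q) := hang.monotoneOn_midpoint
  have hperiod : mid Q = mid 0 + 2 * π := by simp only [mid, hang.wrapQ, hang.wrap0]; ring
  -- all cells `Θ_q` lie in the period `[mid 0, mid 0 + 2π)`, so the shift `k` moving `φ` into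
  -- `Θ_q` is determined by `φ` alone
  have hcell : ∀ q ∈ Finset.Icc 1 Q, ∀ φ ∈ angCell φs q, ∃ k : ℤ,
      φ + 2 * π * k ∈ Ico (mid (q - 1)) (mid q) ∧
      toIcoDiv Real.two_pi_pos (mid 0) φ = -k := by
    intro q hq φ ⟨k, hk⟩
    obtain ⟨hq₁, hqQ⟩ := Finset.mem_Icc.mp hq
    have hk' : φ + 2 * π * k ∈ Ico (mid (q - 1)) (mid q) := by
      simpa only [mid, Nat.sub_add_cancel hq₁] using hk
    refine ⟨k, hk', toIcoDiv_eq_of_sub_zsmul_mem_Ico _ ?_⟩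
    rw [neg_zsmul, sub_neg_eq_add, zsmul_eq_mul, mul_comm (k : ℝ), ← hperiod]
    exact ⟨(hmid (mem_Iic.mpr (Nat.zero_le _)) (mem_Iic.mpr (by omega)) (Nat.zero_le _)).trans
      hk'.1, hk'.2.trans_le (hmid (mem_Iic.mpr hqQ) (mem_Iic.mpr le_rfl) hqQ)⟩
  intro q hq q' hq' hne
  refine Set.disjoint_left.mpr fun φ hφ hφ' => hne ?_
  obtain ⟨k, hk, hdiv⟩ := hcell q hq φ hφ
  obtain ⟨k', hk', hdiv'⟩ := hcell q' hq' φ hφ'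
  obtain rfl : k = k' := neg_inj.mp (hdiv.symm.trans hdiv')
  have hq := Finset.mem_Icc.mp (Finset.mem_coe.mp hq)
  have hq' := Finset.mem_Icc.mp (Finset.mem_coe.mp hq')
  by_contra hne'
  rcases lt_or_gt_of_ne hne' with hlt | hlt
  · linarith [hk.2, hk'.1, hmid (mem_Iic.mpr (by omega)) (mem_Iic.mpr (by omega))
      (show q ≤ q' - 1 by omega)]
  · linarith [hk'.2, hk.1, hmid (mem_Iic.mpr (by omega)) (mem_Iic.mpr (by omega))
      (show q' ≤ q - 1 by omega)]

end AngGrid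

lemma sum_indicator_one_le_one {ι α : Type*} {s : Finset ι} {t : ι → Set α}
    (h : (↑s : Set ι).PairwiseDisjoint t) (x : α) :
    ∑ i ∈ s, (t i).indicator (fun _ => (1 : ℝ)) x ≤ 1 := by
  rw [← Finset.indicator_biUnion_apply s t h]
  exact indicator_apply_le' (fun _ => le_rfl) fun _ => zero_le_one

lemma sq_sum_mul_le_sum_mul_sq {ι : Type*} (s : Finset ι) {c a : ι → ℝ}
    (hc : ∀ i ∈ s, 0 ≤ c i) (hsum : ∑ i ∈ s, c i ≤ 1) :
    (∑ i ∈ s, c i * a i) ^ 2 ≤ ∑ i ∈ s, c i * a i ^ 2 := by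
  have hc_sq : ∀ i ∈ s, 0 ≤ c i * a i ^ 2 := fun i hi => mul_nonneg (hc i hi) (sq_nonneg _)
  calc (∑ i ∈ s, c i * a i) ^ 2 ≤ (∑ i ∈ s, c i) * ∑ i ∈ s, c i * a i ^ 2 :=
        Finset.sum_sq_le_sum_mul_sum_of_sq_le_mul s hc hc_sq fun i _ => le_of_eq (by ring)
    _ ≤ ∑ i ∈ s, c i * a i ^ 2 := mul_le_of_le_one_left (Finset.sum_nonneg hc_sq) hsum

lemma integral_sq_sum_sCell_le {δ : ℝ} (hδ : 0 < δ) (P : ℕ) (a : ℕ → ℝ) :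
    ∫ s in Ioo (-1 : ℝ) 1,
      (∑ p ∈ Finset.Icc 1 P, (sCell δ P p).indicator (fun _ => (1 : ℝ)) s * a p) ^ 2
      ≤ δ * ∑ p ∈ Finset.Icc 1 P, a p ^ 2 := by
  have hχ : ∀ p s, (sCell δ P p).indicator (fun _ => (1 : ℝ)) s * a p ^ 2
      = (sCell δ P p).indicator (fun _ => a p ^ 2) s := fun p s => by
    by_cases hs : s ∈ sCell δ P p <;> simp [hs]
  have hint : ∀ p, Integrable ((sCell δ P p).indicator fun _ => a p ^ 2) :=
    fun p => (integrable_indicator_iff (measurableSet_sCell δ P p)).mpr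
      (integrableOn_const (by rw [volume_sCell]; exact ENNReal.ofReal_ne_top))
  calc ∫ s in Ioo (-1 : ℝ) 1,
        (∑ p ∈ Finset.Icc 1 P, (sCell δ P p).indicator (fun _ => (1 : ℝ)) s * a p) ^ 2
      ≤ ∫ s in Ioo (-1 : ℝ) 1,
          ∑ p ∈ Finset.Icc 1 P, (sCell δ P p).indicator (fun _ => a p ^ 2) s :=
        integral_mono_of_nonneg (ae_of_all _ fun _ => sq_nonneg _)
          (integrable_finsetSum _ fun p _ => hint p).integrableOn
          (ae_of_all _ fun s => by
            simp_rw [← hχ]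
            exact sq_sum_mul_le_sum_mul_sq _
              (fun p _ => indicator_nonneg (fun _ _ => zero_le_one) _)
              (sum_indicator_one_le_one ((pairwise_disjoint_sCell hδ P).set_pairwise _) s))
    _ ≤ ∫ s, ∑ p ∈ Finset.Icc 1 P, (sCell δ P p).indicator (fun _ => a p ^ 2) s :=
        setIntegral_le_integral (integrable_finsetSum _ fun p _ => hint p)
          (ae_of_all _ fun s =>
            Finset.sum_nonneg fun p _ => indicator_nonneg (fun _ _ => sq_nonneg _) _)
    _ = δ * ∑ p ∈ Finset.Icc 1 P, a p ^ 2 := by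
        rw [integral_finsetSum _ fun p _ => hint p, Finset.mul_sum]
        refine Finset.sum_congr rfl fun p _ => ?_
        rw [integral_indicator_const _ (measurableSet_sCell δ P p), measureReal_def, volume_sCell,
          ENNReal.toReal_ofReal hδ.le, smul_eq_mul]

section Sinogram

variable {δs : ℝ} (hδs : 0 < δs) {P Q : ℕ} {φs : ℕ → ℝ} (hang : AngGrid Q φs) (c : ℕ → ℕ → ℝ)
  {K : ℝ} (hK : ∀ q ∈ Finset.Icc 1 Q, ∑ p ∈ Finset.Icc 1 P, c q p ^ 2 ≤ K)
include hδs hang hK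

lemma integral_sq_sinogram_slice_le (φ : ℝ) :
    ∫ s in Ioo (-1 : ℝ) 1,
      (∑ q ∈ Finset.Icc 1 Q, ∑ p ∈ Finset.Icc 1 P,
        (sCell δs P p).indicator (fun _ => (1 : ℝ)) s *
          (angCell φs q).indicator (fun _ => (1 : ℝ)) φ * c q p) ^ 2 ≤ δs * K := by
  have hK₀ : 0 ≤ K := (Finset.sum_nonneg fun p _ => sq_nonneg _).trans
    (hK 1 (Finset.mem_Icc.mpr ⟨le_rfl, hang.one_le⟩))
  set χ : ℕ → ℝ := fun q => (angCell φs q).indicator (fun _ => (1 : ℝ)) φ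
  have hχ₀ : ∀ q, 0 ≤ χ q := fun q => indicator_nonneg (fun _ _ => zero_le_one) _
  have hχ₁ : ∑ q ∈ Finset.Icc 1 Q, χ q ≤ 1 :=
    sum_indicator_one_le_one hang.pairwiseDisjoint_angCell φ
  have hswap : ∀ s, ∑ q ∈ Finset.Icc 1 Q, ∑ p ∈ Finset.Icc 1 P,
      (sCell δs P p).indicator (fun _ => (1 : ℝ)) s *
        (angCell φs q).indicator (fun _ => (1 : ℝ)) φ * c q p
      = ∑ p ∈ Finset.Icc 1 P, (sCell δs P p).indicator (fun _ => (1 : ℝ)) s *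
        ∑ q ∈ Finset.Icc 1 Q, χ q * c q p := fun s => by
    rw [Finset.sum_comm]; simp_rw [Finset.mul_sum, mul_assoc, χ]
  simp_rw [hswap]
  refine (integral_sq_sum_sCell_le hδs P _).trans (mul_le_mul_of_nonneg_left ?_ hδs.le)
  calc ∑ p ∈ Finset.Icc 1 P, (∑ q ∈ Finset.Icc 1 Q, χ q * c q p) ^ 2
      ≤ ∑ p ∈ Finset.Icc 1 P, ∑ q ∈ Finset.Icc 1 Q, χ q * c q p ^ 2 :=
        Finset.sum_le_sum fun p _ => sq_sum_mul_le_sum_mul_sq _ (fun q _ => hχ₀ q) hχ₁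
    _ = ∑ q ∈ Finset.Icc 1 Q, χ q * ∑ p ∈ Finset.Icc 1 P, c q p ^ 2 := by
        rw [Finset.sum_comm]; simp_rw [Finset.mul_sum]
    _ ≤ ∑ q ∈ Finset.Icc 1 Q, χ q * K :=
        Finset.sum_le_sum fun q hq => mul_le_mul_of_nonneg_left (hK q hq) (hχ₀ q)
    _ ≤ K := by rw [← Finset.sum_mul]; exact mul_le_of_le_one_left hK₀ hχ₁

lemma integral_sq_sinogram_le :
    ∫ φ in Ioc (-π) π, ∫ s in Ioo (-1 : ℝ) 1,
      (∑ q ∈ Finset.Icc 1 Q, ∑ p ∈ Finset.Icc 1 P,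
        (sCell δs P p).indicator (fun _ => (1 : ℝ)) s *
          (angCell φs q).indicator (fun _ => (1 : ℝ)) φ * c q p) ^ 2
      ≤ 2 * π * (δs * K) := by
  calc _ ≤ ∫ _ in Ioc (-π) π, δs * K :=
        integral_mono_of_nonneg (ae_of_all _ fun _ => integral_nonneg fun _ => sq_nonneg _)
          (integrableOn_const (by rw [Real.volume_Ioc]; exact ENNReal.ofReal_ne_top))
          (ae_of_all _ (integral_sq_sinogram_slice_le hδs hang c hK))
    _ = 2 * π * (δs * K) := by
        rw [setIntegral_const, measureReal_def, Real.volume_Ioc,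
          ENNReal.toReal_ofReal (by linarith [Real.pi_pos]), smul_eq_mul]
        ring

end Sinogram

lemma radonFull_sub_radonSA (δs : ℝ) (P Q : ℕ) (φs : ℕ → ℝ) (δx : ℝ) (N M : ℕ)
    (f : ℝ × ℝ → ℝ) (s φ : ℝ) :
    RadonFull δs P Q φs δx N M f s φ - RadonSA δs P Q φs f s φ
      = ∑ q ∈ Finset.Icc 1 Q, ∑ p ∈ Finset.Icc 1 P,
          (sCell δs P p).indicator (fun _ => (1 : ℝ)) s *
            (angCell φs q).indicator (fun _ => (1 : ℝ)) φ *
              ((δs ^ 2)⁻¹ * pixelError δs δx N M f (φs q) (sCen δs P p)) := by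
  rw [RadonFull, RadonSA, ← mul_sub, ← Finset.sum_sub_distrib, Finset.mul_sum]
  refine Finset.sum_congr rfl fun q _ => ?_
  rw [← Finset.sum_sub_distrib, Finset.mul_sum]
  refine Finset.sum_congr rfl fun p _ => ?_
  rw [pixelError]
  ring

lemma sq_min_mul_le {a b : ℝ} (ha : 0 < a) (hb : 0 < b) :
    min b a ^ 2 * (3 * a + 2 * b) ≤ 5 * b ^ 2 * a := by
  rcases le_total b a with hba | hab
  · rw [min_eq_left hba]; nlinarith [sq_nonneg b]
  · rw [min_eq_right hab]
    nlinarith [mul_le_mul_of_nonneg_left hab (mul_pos ha hb).le,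
      mul_le_mul_of_nonneg_left (mul_le_mul hab hab ha.le hb.le) ha.le]

lemma integral_sq_radonFull_sub_radonSA_le {δs δx : ℝ} (hδs : 0 < δs) (hδx : 0 < δx)
    {P Q N M : ℕ} {φs : ℕ → ℝ} (hang : AngGrid Q φs) (hcov : CoversDisk δx N M)
    {f : ℝ × ℝ → ℝ} (hsupp : SuppDisk f) (hf : MemLp f 2 (volume : Measure (ℝ × ℝ))) :
    ∫ φ in Ioc (-π) π, ∫ s in Ioo (-1 : ℝ) 1,
      (RadonFull δs P Q φs δx N M f s φ - RadonSA δs P Q φs f s φ) ^ 2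
      ≤ (Real.sqrt (40 * π) * Real.sqrt (1 + δx / δs) * (δx / δs)) ^ 2 * ∫ x, f x ^ 2 := by
  set F := ∫ x, f x ^ 2
  have hF : 0 ≤ F := integral_nonneg fun _ => sq_nonneg _
  have hI := integral_sq_sinogram_le hδs hang
    (fun q p => (δs ^ 2)⁻¹ * pixelError δs δx N M f (φs q) (sCen δs P p))
    (K := ((δs ^ 2)⁻¹) ^ 2 * (min δx δs ^ 2 * (4 * (δs + δx)) * ((2 * (δs + δx) / δs + 1) * F)))
    fun q _ => by
      simp_rw [mul_pow, ← Finset.mul_sum]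
      exact mul_le_mul_of_nonneg_left (sum_sq_pixelError_le hδs hδx hcov hsupp hf P (φs q))
        (sq_nonneg _)
  simp_rw [← radonFull_sub_radonSA] at hI
  refine hI.trans ?_
  have hkey := sq_min_mul_le hδs hδx
  rw [mul_pow, mul_pow, Real.sq_sqrt (by positivity), Real.sq_sqrt (by positivity)]
  calc _ = 8 * π * (δs + δx) * F / δs ^ 4 * (min δx δs ^ 2 * (3 * δs + 2 * δx)) := by
        field_simp; ring
    _ ≤ 8 * π * (δs + δx) * F / δs ^ 4 * (5 * δx ^ 2 * δs) := by gcongr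
    _ = _ := by field_simp; ring

/-- `‖R^{δ_x}_{δ_s,δ_φ} − R_{δ_s,δ_φ}‖ ≤ C √(1 + δ_x/δ_s) (δ_x/δ_s)`
in the operator norm `L²(Ω) → L²(Ω')`. -/
theorem radon_image_discretization :
    ∃ C : ℝ, 0 < C ∧ ∀ (δs δx : ℝ) (P Q N M : ℕ) (φs : ℕ → ℝ),
      0 < δs → 0 < δx → CoversI δs P → AngGrid Q φs → CoversDisk δx N M →
      ∀ f : ℝ × ℝ → ℝ, SuppDisk f → L2Img f →
        nSinoD (fun s φ =>
          RadonFull δs P Q φs δx N M f s φ - RadonSA δs P Q φs f s φ) ≤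
          C * Real.sqrt (1 + δx / δs) * (δx / δs) * nImg f := by
  refine ⟨Real.sqrt (40 * π), by positivity, ?_⟩
  intro δs δx P Q N M φs hδs hδx _ hang hcov f hsupp hf
  rw [nSinoD, nImg, ← Real.sqrt_eq_rpow, ← Real.sqrt_eq_rpow, ← Real.sqrt_sq (by positivity :
    0 ≤ Real.sqrt (40 * π) * Real.sqrt (1 + δx / δs) * (δx / δs)), ← Real.sqrt_mul (sq_nonneg _)]
  exact Real.sqrt_le_sqrt (integral_sq_radonFull_sub_radonSA_le hδs hδx hang hcov hsupp hf)

end
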